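/- arXiv:1602.07829 — 4 statements merged into one kernel-verified Lean document; each statement's English description precedes it below -/
import Mathlib

section
/- Let p be a prime and let G be a subgroup of a direct product H_1 × ⋯ × H_r of finite groups such that for each i, 1 ≤ i ≤ r, the projection map π_i : G → H_i is surjective. Then c_p(G) ≤ c_p(H_1) + ⋯ + c_p(H_r). -/
/-- A composition series of a group `G`: an ascending chain of subgroups from `⊥` to `⊤`
in which each term is normal in the next, with simple quotients. -/
structure GroupCompSeries (G : Type*) [Group G] where
  len : ℕ
  ser : Fin (len + 1) → Subgroup G
  ser_bot : ser 0 = ⊥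
  ser_top : ser (Fin.last len) = ⊤
  ser_le : ∀ i : Fin len, ser i.castSucc ≤ ser i.succ
  ser_normal : ∀ i : Fin len, ((ser i.castSucc).subgroupOf (ser i.succ)).Normal
  ser_simple : ∀ i : Fin len,
    haveI := ser_normal i
    IsSimpleGroup (↥(ser i.succ) ⧸ (ser i.castSucc).subgroupOf (ser i.succ))

/-- The number of factors of order `p` in a composition series. -/
noncomputable def GroupCompSeries.count {G : Type*} [Group G]
    (S : GroupCompSeries G) (p : ℕ) : ℕ := by
  classical
  exact (Finset.univ.filter fun i : Fin S.len =>
    Nat.card (↥(S.ser i.succ) ⧸ (S.ser i.castSucc).subgroupOf (S.ser i.succ)) = p).card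

/-- `cp p G` is the number of composition factors of `G` of order `p`, counted with
multiplicity in a composition series (well defined by Jordan–Hölder). -/
noncomputable def cp (p : ℕ) (G : Type*) [Group G] : ℕ := by
  classical
  exact if h : Nonempty (GroupCompSeries G) then h.some.count p else 0

/-- The constant `ε_q` of Theorem 1, for `q = p ^ f`. -/
noncomputable def epsq (p f : ℕ) : ℚ := by
  classical
  exact if p = 2 ∧ Even f then 4 / 3
    else if ∃ n : ℕ, p = 2 ^ 2 ^ n + 1 then p / (p - 1)
    else 1

/-- A subgroup of `GL(d, F)` acts irreducibly on its natural module. -/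
def natIrreducible {F : Type*} [Field F] {d : ℕ}
    (G : Subgroup (Matrix.GeneralLinearGroup (Fin d) F)) : Prop :=
  (⊥ : Submodule F (Fin d → F)) ≠ ⊤ ∧
  ∀ W : Submodule F (Fin d → F),
    (∀ g ∈ G, ∀ v ∈ W, Matrix.mulVec (g : Matrix (Fin d) (Fin d) F) v ∈ W) →
      W = ⊥ ∨ W = ⊤

/-!
Let `N` be the kernel of the projection of `G` onto `H₂ × ⋯ × H_r`. The quotient `G ⧸ N` is the
image of this projection, again a subgroup of a product projecting onto every factor, and the
first projection, being injective on `N` and surjective on `G`, identifies `N` with a normal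
subgroup of `H₁`. As `c_p` is invariant under isomorphism and additive along `N ⊴ G`,
`c_p(G) = c_p(N) + c_p(G ⧸ N) ≤ c_p(H₁) + c_p(G ⧸ N)`, and induction on `r` concludes.

Both properties of `c_p` come from the Jordan–Hölder theorem: subgroups, with "maximal normal
subgroup of", form a `JordanHolderLattice`, and a composition series of `G` through `N` is glued
from the image of one of `N` and the preimage of one of `G ⧸ N`.
-/

open Subgroup QuotientGroup

namespace Subgroup

variable {G G' : Type*} [Group G] [Group G']

def IsCompositionStep (A B : Subgroup G) : Prop :=
  A ≤ B ∧ ∃ _ : (A.subgroupOf B).Normal, IsSimpleGroup (B ⧸ A.subgroupOf B)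

theorem IsCompositionStep.of_surjective {A B : Subgroup G} {A' B' : Subgroup G'}
    (h : IsCompositionStep A B) (hle : A' ≤ B') (φ : B' →* B) (hφ : Function.Surjective φ)
    (hA : (A.subgroupOf B).comap φ = A'.subgroupOf B') : IsCompositionStep A' B' := by
  obtain ⟨-, _, _⟩ := h
  let ψ := (mk' (A.subgroupOf B)).comp φ
  have hψ : ψ.ker = A'.subgroupOf B' := by rw [← hA, ← MonoidHom.comap_ker, ker_mk']
  have : (A'.subgroupOf B').Normal := hψ ▸ ψ.normal_ker
  exact ⟨hle, this, ((quotientMulEquivOfEq hψ).symm.trans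
    (quotientKerEquivOfSurjective ψ ((mk'_surjective _).comp hφ))).isSimpleGroup⟩

theorem IsCompositionStep.map {f : G →* G'} (hf : Function.Injective f) {A B : Subgroup G}
    (h : IsCompositionStep A B) : IsCompositionStep (A.map f) (B.map f) := by
  let e := B.equivMapOfInjective f hf
  refine h.of_surjective (map_mono h.1) e.symm.toMonoidHom e.symm.surjective ?_
  ext x
  obtain ⟨y, rfl⟩ := e.surjective x
  simp [mem_subgroupOf, e, mem_map_iff_mem hf]

theorem IsCompositionStep.comap {f : G →* G'} (hf : Function.Surjective f) {A B : Subgroup G'}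
    (h : IsCompositionStep A B) : IsCompositionStep (A.comap f) (B.comap f) :=
  h.of_surjective (comap_mono h.1) (f.subgroupComap B)
    (f.subgroupComap_surjective_of_surjective B hf) rfl

theorem le_or_sup_eq_top_of_isSimpleGroup_quotient {N M : Subgroup G} [N.Normal]
    [IsSimpleGroup (G ⧸ N)] (hM : M.Normal) : M ≤ N ∨ N ⊔ M = ⊤ := by
  refine (hM.map _ (mk'_surjective N)).eq_bot_or_eq_top.imp (fun h => ?_) (fun h => ?_)
  · rwa [map_eq_bot_iff, ker_mk'] at h
  · rw [sup_comm, ← ker_mk' N, ← comap_map_eq, h, comap_top]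

theorem IsCompositionStep.lt {A B : Subgroup G} (h : IsCompositionStep A B) : A < B := by
  obtain ⟨hle, _, hS⟩ := h
  refine lt_of_le_of_ne hle fun hAB => ?_
  subst hAB
  have : Subsingleton (A ⧸ A.subgroupOf A) := by
    rw [subgroupOf_self]; exact QuotientGroup.subsingleton_quotient_top
  exact not_subsingleton _ this

theorem IsCompositionStep.sup_eq {A B C : Subgroup G} (hA : IsCompositionStep A C)
    (hB : IsCompositionStep B C) (hne : A ≠ B) : A ⊔ B = C := by
  obtain ⟨hAC, hAn, _⟩ := hA
  obtain ⟨hBC, hBn, _⟩ := hB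
  refine le_antisymm (sup_le hAC hBC) (subgroupOf_eq_top.1 ?_)
  rw [subgroupOf_sup hAC hBC]
  rcases le_or_sup_eq_top_of_isSimpleGroup_quotient (N := A.subgroupOf C) hBn with hBA | h
  · rcases le_or_sup_eq_top_of_isSimpleGroup_quotient (N := B.subgroupOf C) hAn with hAB | h
    · refine absurd ?_ hne
      have := subgroupOf_inj.1 (le_antisymm hAB hBA)
      rwa [inf_of_le_left hAC, inf_of_le_left hBC] at this
    · rwa [sup_comm]
  · exact h

theorem IsCompositionStep.inf_left {A B : Subgroup G} (hB : IsCompositionStep B (A ⊔ B)) :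
    IsCompositionStep (A ⊓ B) A := by
  obtain ⟨-, hBn, _⟩ := hB
  have hA : A ≤ normalizer B :=
    le_sup_left.trans ((normal_subgroupOf_iff_le_normalizer le_sup_right).1 hBn)
  have := normal_subgroupOf_of_le_normalizer hA
  have : ((A ⊓ B).subgroupOf A).Normal := (inf_subgroupOf_left B A).symm ▸ this
  exact ⟨inf_le_left, this, ((quotientMulEquivOfEq (inf_subgroupOf_left B A)).trans
    (quotientInfEquivProdNormalizerQuotient A B hA)).isSimpleGroup⟩

end Subgroup

instance {G : Type*} [Group G] : JordanHolderLattice (Subgroup G) where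
  IsMaximal := IsCompositionStep
  lt_of_isMaximal := IsCompositionStep.lt
  sup_eq_of_isMaximal := IsCompositionStep.sup_eq
  isMaximal_inf_left_of_isMaximal_sup _ hy := hy.inf_left

namespace Subgroup

variable {G : Type*} [Group G]

theorem relIndex_sup_right_of_le_normalizer {H K : Subgroup G} (h : H ≤ normalizer K) :
    K.relIndex (H ⊔ K) = K.relIndex H :=
  have := normal_subgroupOf_of_le_normalizer h
  have := normal_subgroupOf_sup_of_le_normalizer h
  Nat.card_congr (quotientInfEquivProdNormalizerQuotient H K h).toEquiv.symm

theorem relIndex_eq_of_iso {x y : Subgroup G × Subgroup G} (h : JordanHolderLattice.Iso x y) :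
    x.1.relIndex x.2 = y.1.relIndex y.2 := by
  refine JordanHolderLattice.Iso.rel (fun x y => x.1.relIndex x.2 = y.1.relIndex y.2) rfl
    Eq.symm Eq.trans (fun {a b} h => ?_) h
  obtain ⟨-, ha, -⟩ := h
  have hb : b ≤ normalizer a :=
    le_sup_right.trans ((normal_subgroupOf_iff_le_normalizer le_sup_left).1 ha)
  simp only [inf_relIndex_right, ← relIndex_sup_right_of_le_normalizer hb, sup_comm]

theorem exists_isSimpleGroup_quotient [Finite G] [Nontrivial G] :
    ∃ N : Subgroup G, ∃ _ : N.Normal, IsSimpleGroup (G ⧸ N) := by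
  obtain ⟨N, ⟨hN, hNtop⟩, hmax⟩ :=
    (Set.toFinite {N : Subgroup G | N.Normal ∧ N ≠ ⊤}).exists_maximal ⟨⊥, normal_bot, bot_ne_top⟩
  have : Nontrivial (G ⧸ N) := QuotientGroup.nontrivial_iff.2 hNtop
  refine ⟨N, hN, ⟨fun K hK => ?_⟩⟩
  by_cases htop : K.comap (mk' N) = ⊤
  · right
    rw [← map_comap_eq_self_of_surjective (mk'_surjective N) K, htop, ← MonoidHom.range_eq_map,
      range_mk']
  · left
    have hNK : N ≤ K.comap (mk' N) := le_comap_mk' N K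
    rw [← map_comap_eq_self_of_surjective (mk'_surjective N) K,
      ← le_antisymm hNK (hmax ⟨hK.comap _, htop⟩ hNK), map_mk'_self]

theorem exists_isCompositionStep [Finite G] {K : Subgroup G} (hK : K ≠ ⊥) :
    ∃ N, IsCompositionStep N K := by
  have := (nontrivial_iff_ne_bot K).2 hK
  obtain ⟨N, hN, _⟩ := exists_isSimpleGroup_quotient (G := K)
  have hNK : (N.map K.subtype).subgroupOf K = N :=
    comap_map_eq_self_of_injective K.subtype_injective N
  have : ((N.map K.subtype).subgroupOf K).Normal := by rw [hNK]; exact hN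
  exact ⟨N.map K.subtype, map_subtype_le N, this, (quotientMulEquivOfEq hNK).isSimpleGroup⟩

theorem exists_compositionSeries [Finite G] (K : Subgroup G) :
    ∃ s : CompositionSeries (Subgroup G), s.head = ⊥ ∧ s.last = K := by
  induction K using WellFoundedLT.induction with
  | _ K ih =>
    rcases eq_or_ne K ⊥ with rfl | hK
    · exact ⟨RelSeries.singleton _ ⊥, rfl, rfl⟩
    obtain ⟨N, hN⟩ := exists_isCompositionStep hK
    obtain ⟨s, hs0, hs1⟩ := ih N hN.lt
    exact ⟨s.snoc K (hs1 ▸ hN), by simp [hs0], by simp⟩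

end Subgroup

namespace CompositionSeries

open Finset

variable {G G' : Type*} [Group G] [Group G']

/-- `(s i).relIndex (s (i + 1))` is the order of the factor `s (i + 1) ⧸ s i`. -/
noncomputable def factorCount (s : CompositionSeries (Subgroup G)) (p : ℕ) : ℕ :=
  #{i : Fin s.length | (s i.castSucc).relIndex (s i.succ) = p}

theorem factorCount_eq_of_equivalent {s t : CompositionSeries (Subgroup G)}
    (h : s.Equivalent t) (p : ℕ) : s.factorCount p = t.factorCount p := by
  obtain ⟨e, he⟩ := h
  exact card_equiv e fun i => by simp [relIndex_eq_of_iso (he i)]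

theorem factorCount_map (s : CompositionSeries (Subgroup G))
    (f : SetRel.Hom {(x, y) : Subgroup G × Subgroup G | JordanHolderLattice.IsMaximal x y}
      {(x, y) : Subgroup G' × Subgroup G' | JordanHolderLattice.IsMaximal x y})
    (hf : ∀ A B, (f A).relIndex (f B) = A.relIndex B) (p : ℕ) :
    factorCount (s.map f) p = s.factorCount p :=
  congrArg card (filter_congr fun i _ => by rw [← hf]; rfl)

def mapOfInjective (s : CompositionSeries (Subgroup G)) {f : G →* G'}
    (hf : Function.Injective f) : CompositionSeries (Subgroup G') :=
  s.map ⟨Subgroup.map f, fun h => IsCompositionStep.map hf h⟩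

def comapOfSurjective (s : CompositionSeries (Subgroup G')) {f : G →* G'}
    (hf : Function.Surjective f) : CompositionSeries (Subgroup G) :=
  s.map ⟨Subgroup.comap f, fun h => IsCompositionStep.comap hf h⟩

theorem factorCount_mapOfInjective (s : CompositionSeries (Subgroup G)) {f : G →* G'}
    (hf : Function.Injective f) (p : ℕ) :
    factorCount (mapOfInjective s hf) p = s.factorCount p :=
  factorCount_map s ⟨Subgroup.map f, fun h => IsCompositionStep.map hf h⟩
    (fun A B => relIndex_map_map_of_injective A B hf) p

theorem factorCount_comapOfSurjective (s : CompositionSeries (Subgroup G')) {f : G →* G'}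
    (hf : Function.Surjective f) (p : ℕ) :
    factorCount (comapOfSurjective s hf) p = s.factorCount p :=
  factorCount_map s ⟨Subgroup.comap f, fun h => IsCompositionStep.comap hf h⟩
    (fun A B => by
      show (A.comap f).relIndex (B.comap f) = _
      rw [relIndex_comap, map_comap_eq_self_of_surjective hf]) p

theorem factorCount_smash {s t : CompositionSeries (Subgroup G)} (h : s.last = t.head) (p : ℕ) :
    factorCount (s.smash t h) p = s.factorCount p + t.factorCount p := by
  simp only [factorCount, card_filter]
  refine (Fin.sum_univ_add _).trans (congrArg₂ (· + ·) (sum_congr rfl fun i _ => ?_)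
    (sum_congr rfl fun i _ => ?_))
  · rw [← RelSeries.smash_castAdd h i, ← RelSeries.smash_succ_castAdd h i]; rfl
  · rw [← RelSeries.smash_natAdd h i, ← RelSeries.smash_succ_natAdd h i]; rfl

end CompositionSeries

namespace GroupCompSeries

variable {G : Type*} [Group G]

def toCompositionSeries (S : GroupCompSeries G) : CompositionSeries (Subgroup G) where
  length := S.len
  toFun := S.ser
  step i := ⟨S.ser_le i, S.ser_normal i, S.ser_simple i⟩

def ofCompositionSeries (s : CompositionSeries (Subgroup G)) (h0 : s.head = ⊥)
    (h1 : s.last = ⊤) : GroupCompSeries G where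
  len := s.length
  ser := s
  ser_bot := h0
  ser_top := h1
  ser_le i := (s.step i).1
  ser_normal i := (s.step i).2.fst
  ser_simple i := (s.step i).2.snd

theorem count_eq_factorCount (S : GroupCompSeries G) (p : ℕ) :
    S.count p = S.toCompositionSeries.factorCount p :=
  rfl

end GroupCompSeries

section cp

open CompositionSeries

variable {G H : Type*} [Group G] [Group H]

theorem cp_eq_factorCount (p : ℕ) (s : CompositionSeries (Subgroup G)) (h0 : s.head = ⊥)
    (h1 : s.last = ⊤) : cp p G = s.factorCount p := by
  have hS : Nonempty (GroupCompSeries G) := ⟨.ofCompositionSeries s h0 h1⟩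
  rw [cp, dif_pos hS, GroupCompSeries.count_eq_factorCount]
  refine factorCount_eq_of_equivalent (jordan_holder _ _ ?_ ?_) p
  · exact hS.some.ser_bot.trans h0.symm
  · exact hS.some.ser_top.trans h1.symm

theorem cp_eq_zero_of_subsingleton [Subsingleton G] (p : ℕ) : cp p G = 0 :=
  cp_eq_factorCount p (RelSeries.singleton _ ⊥) rfl (Subsingleton.elim _ _)

theorem cp_congr [Finite G] (e : G ≃* H) (p : ℕ) : cp p G = cp p H := by
  obtain ⟨s, hs0, hs1⟩ := exists_compositionSeries (⊤ : Subgroup G)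
  have hf : Function.Injective e.toMonoidHom := e.injective
  rw [cp_eq_factorCount p s hs0 hs1,
    cp_eq_factorCount p (mapOfInjective s hf) (by simp [mapOfInjective, hs0])
      (by simp [mapOfInjective, hs1]), factorCount_mapOfInjective]

theorem cp_eq_add [Finite G] (N : Subgroup G) [N.Normal] (p : ℕ) :
    cp p G = cp p N + cp p (G ⧸ N) := by
  obtain ⟨s, hs0, hs1⟩ := exists_compositionSeries (⊤ : Subgroup N)
  obtain ⟨t, ht0, ht1⟩ := exists_compositionSeries (⊤ : Subgroup (G ⧸ N))
  let s' := mapOfInjective s N.subtype_injective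
  let t' := comapOfSurjective t (mk'_surjective N)
  have hst : s'.last = t'.head := by
    simp [s', t', mapOfInjective, comapOfSurjective, hs1, ht0, ← MonoidHom.range_eq_map]
  rw [cp_eq_factorCount p s hs0 hs1, cp_eq_factorCount p t ht0 ht1,
    cp_eq_factorCount p (s'.smash t' hst) (by simp [s', mapOfInjective, hs0])
      (by simp [t', comapOfSurjective, ht1]),
    factorCount_smash, factorCount_mapOfInjective, factorCount_comapOfSurjective]

theorem cp_le_of_injective [Finite H] {f : G →* H} (hf : Function.Injective f) [f.range.Normal]
    (p : ℕ) : cp p G ≤ cp p H := by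
  have := Finite.of_injective f hf
  calc cp p G = cp p f.range := cp_congr (MonoidHom.ofInjective hf) p
    _ ≤ cp p f.range + cp p (H ⧸ f.range) := Nat.le_add_right _ _
    _ = cp p H := (cp_eq_add f.range p).symm

theorem cp_le_add_of_disjoint_ker [Finite G] {H₁ H₂ : Type*} [Group H₁] [Group H₂]
    {f₁ : G →* H₁} (hf₁ : Function.Surjective f₁) (f₂ : G →* H₂) (h : Disjoint f₁.ker f₂.ker)
    (p : ℕ) : cp p G ≤ cp p H₁ + cp p f₂.range := by
  have := Finite.of_surjective f₁ hf₁
  let ι := f₁.comp f₂.ker.subtype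
  have hι : Function.Injective ι :=
    (injective_iff_map_eq_one ι).2 fun x hx => Subtype.ext (disjoint_def.1 h hx x.2)
  have : ι.range.Normal := by
    rw [MonoidHom.range_comp, range_subtype]
    exact (MonoidHom.normal_ker f₂).map f₁ hf₁
  calc cp p G = cp p f₂.ker + cp p (G ⧸ f₂.ker) := cp_eq_add f₂.ker p
    _ = cp p f₂.ker + cp p f₂.range := by rw [cp_congr (quotientKerEquivRange f₂)]
    _ ≤ cp p H₁ + cp p f₂.range := Nat.add_le_add_right (cp_le_of_injective hι p) _

end cp

theorem cp_le_sum_of_subgroup_pi_general (p : ℕ)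
    (r : ℕ) (H : Fin r → Type) [∀ i, Group (H i)] [∀ i, Finite (H i)]
    (G : Subgroup (∀ i, H i))
    (hsurj : ∀ i : Fin r, ∀ x : H i, ∃ g ∈ G, g i = x) :
    cp p ↥G ≤ ∑ i : Fin r, cp p (H i) := by
  induction r with
  | zero => simp [cp_eq_zero_of_subsingleton]
  | succ r ih =>
    let head : G →* H 0 := (Pi.evalMonoidHom H 0).comp G.subtype
    let tail : G →* ∀ i : Fin r, H i.succ :=
      (MonoidHom.pi fun i => Pi.evalMonoidHom H i.succ).comp G.subtype
    have hhead : Function.Surjective head := fun x =>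
      let ⟨g, hg, hgx⟩ := hsurj 0 x; ⟨⟨g, hg⟩, hgx⟩
    have htail : ∀ i x, ∃ g ∈ tail.range, g i = x := fun i x =>
      let ⟨g, hg, hgx⟩ := hsurj i.succ x; ⟨tail ⟨g, hg⟩, ⟨_, rfl⟩, hgx⟩
    have hker : Disjoint head.ker tail.ker :=
      disjoint_def.2 fun h0 hs => Subtype.ext (funext fun i => i.cases h0 fun i => congrFun hs i)
    calc cp p G ≤ cp p (H 0) + cp p tail.range := cp_le_add_of_disjoint_ker hhead tail hker p
      _ ≤ cp p (H 0) + ∑ i : Fin r, cp p (H i.succ) := Nat.add_le_add_left (ih _ _ htail) _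
      _ = ∑ i : Fin (r + 1), cp p (H i) := (Fin.sum_univ_succ fun i => cp p (H i)).symm

/-- If `G` is a subgroup of a direct product `H_1 × ⋯ × H_r` of finite groups projecting
onto each factor, then `c_p(G) ≤ c_p(H_1) + ⋯ + c_p(H_r)`. -/
theorem cp_le_sum_of_subgroup_pi (p : ℕ) (hp : p.Prime)
    (r : ℕ) (H : Fin r → Type) [∀ i, Group (H i)] [∀ i, Finite (H i)]
    (G : Subgroup (∀ i, H i))
    (hsurj : ∀ i : Fin r, ∀ x : H i, ∃ g ∈ G, g i = x) :
    cp p ↥G ≤ ∑ i : Fin r, cp p (H i) :=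
  cp_le_sum_of_subgroup_pi_general p r H G hsurj
end

section
/- Let p be an odd prime, let r be a prime with r ≡ 1 (mod p), let f = p^k for some integer k ≥ 1, let q = r^f, and let d ≥ 1. Then c_p(GL(d,q)) ≥ v_p(r−1) + k. In particular, when p does not divide q, c_p of completely reducible subgroups of GL(d,q) cannot be bounded by a function of d and p alone. -/
/-! The determinant maps `GL(d, q)` onto the cyclic group `𝔽_q^×` of order `q - 1 = r ^ p ^ k - 1`,
whose `p`-adic valuation is `v_p(r - 1) + k` by lifting the exponent; hence `GL(d, q)` maps onto
a cyclic group of order `p ^ m` with `m = v_p(r - 1) + k`. Pushing a composition series forward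
along a surjection onto a group `H`, each factor either collapses or survives intact, and the
orders of the survivors multiply to `|H|`. When `H` is a `p`-group every survivor is a simple
`p`-group, hence of order `p`, so at least `m` composition factors have order `p`. -/

open Subgroup

section

variable {G H : Type*} [Group G] [Group H]

theorem QuotientGroup.isSimpleGroup_iff {N : Subgroup G} [N.Normal] :
    IsSimpleGroup (G ⧸ N) ↔ N ≠ ⊤ ∧ ∀ K : Subgroup G, K.Normal → N ≤ K → K = N ∨ K = ⊤ := by
  constructor
  · intro hsimple
    refine ⟨QuotientGroup.nontrivial_iff.mp inferInstance, fun K hK hNK => ?_⟩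
    have hmap : (K.map (mk' N)).Normal := hK.map _ (mk'_surjective N)
    refine hmap.eq_bot_or_eq_top.imp (fun h => ?_) (fun h => ?_)
    · rw [Subgroup.map_eq_bot_iff, ker_mk'] at h
      exact le_antisymm h hNK
    · rw [← sup_eq_right.mpr hNK, ← comap_map_mk', h, comap_top]
  · rintro ⟨hN, hmax⟩
    have := QuotientGroup.nontrivial_iff.mpr hN
    refine ⟨fun K hK => ?_⟩
    rw [← map_comap_eq_self_of_surjective (mk'_surjective N) K]
    refine (hmax _ (hK.comap _) (le_comap_mk' N K)).imp (fun h => ?_) (fun h => ?_)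
    · rw [h, Subgroup.map_eq_bot_iff, ker_mk']
    · rw [h, map_top_of_surjective _ (mk'_surjective N)]

variable (G) in
theorem Subgroup.exists_normal_isSimpleGroup_quotient [Finite G] [Nontrivial G] :
    ∃ M : Subgroup G, ∃ _ : M.Normal, IsSimpleGroup (G ⧸ M) := by
  obtain ⟨M, -, ⟨hM, hMtop⟩, hmax⟩ := Finite.exists_le_maximal
    (p := fun K : Subgroup G => K.Normal ∧ K ≠ ⊤) ⟨normal_bot, bot_ne_top⟩
  refine ⟨M, hM, QuotientGroup.isSimpleGroup_iff.mpr ⟨hMtop, fun K hK hMK => ?_⟩⟩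
  by_cases hKtop : K = ⊤
  · exact Or.inr hKtop
  · exact Or.inl (le_antisymm (hmax ⟨hK, hKtop⟩ hMK) hMK)

theorem Subgroup.map_subgroupOf_subgroupMap (f : G →* H) {K L : Subgroup G} (hKL : K ≤ L) :
    (K.subgroupOf L).map (f.subgroupMap L) = (K.map f).subgroupOf (L.map f) := by
  ext ⟨x, hx⟩
  simp only [mem_map, mem_subgroupOf, Subtype.ext_iff, Subtype.exists]
  exact ⟨fun ⟨a, _, ha, h⟩ => ⟨a, ha, h⟩, fun ⟨a, ha, h⟩ => ⟨a, hKL ha, ha, h⟩⟩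

theorem Subgroup.prod_relIndex_of_monotone {n : ℕ} (K : Fin (n + 1) → Subgroup G)
    (hK : Monotone K) :
    ∏ i : Fin n, (K i.castSucc).relIndex (K i.succ) = (K 0).relIndex (K (Fin.last n)) := by
  induction n with
  | zero => simp [relIndex_self]
  | succ n ih =>
    have := ih (K ∘ Fin.castSucc) (hK.comp Fin.strictMono_castSucc.monotone)
    simp only [Function.comp_apply, Fin.castSucc_zero] at this
    simp only [Fin.prod_univ_castSucc, Fin.succ_castSucc, this, Fin.succ_last]
    exact relIndex_mul_relIndex _ _ _ (hK (Fin.zero_le _)) (hK (Fin.castSucc_le_succ _))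

theorem IsPGroup.card_eq_of_isSimpleGroup [Finite G] [IsSimpleGroup G] {p : ℕ} [Fact p.Prime]
    (hG : IsPGroup p G) : Nat.card G = p := by
  have := hG.isNilpotent
  have hprime : (Nat.card G).Prime := IsSimpleGroup.prime_card
  obtain ⟨n, hn⟩ := hG.exists_card_eq
  rw [hn] at hprime ⊢
  rw [hprime.eq_one_of_pow, pow_one]

def Subgroup.IsCompositionStep_s13 (N M : Subgroup G) : Prop :=
  N ≤ M ∧ ∃ _ : (N.subgroupOf M).Normal, IsSimpleGroup (M ⧸ N.subgroupOf M)

theorem Subgroup.isCompositionStep_top (M : Subgroup G) [M.Normal] [IsSimpleGroup (G ⧸ M)] :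
    M.IsCompositionStep_s13 ⊤ :=
  ⟨le_top, normal_subgroupOf,
    (QuotientGroup.congr (M.subgroupOf ⊤) M topEquiv (by ext; simp [mem_subgroupOf])).isSimpleGroup⟩

namespace Subgroup.IsCompositionStep_s13

variable {N M : Subgroup G}

theorem map_of_injective (h : N.IsCompositionStep_s13 M) {f : G →* H} (hf : Function.Injective f) :
    (N.map f).IsCompositionStep_s13 (M.map f) := by
  obtain ⟨hNM, hnormal, hsimple⟩ := h
  have himage : (N.subgroupOf M).map (M.equivMapOfInjective f hf).toMonoidHom =
      (N.map f).subgroupOf (M.map f) :=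
    map_subgroupOf_subgroupMap f hNM
  have : ((N.map f).subgroupOf (M.map f)).Normal :=
    himage ▸ hnormal.map _ (M.equivMapOfInjective f hf).surjective
  exact ⟨map_mono hNM, this,
    (QuotientGroup.congr _ _ (M.equivMapOfInjective f hf) himage).symm.isSimpleGroup⟩

theorem relIndex_map (h : N.IsCompositionStep_s13 M) (φ : G →* H) :
    (N.map φ).relIndex (M.map φ) = 1 ∨ (N.map φ).relIndex (M.map φ) = N.relIndex M := by
  obtain ⟨hNM, hnormal, hsimple⟩ := h
  set θ := φ.subgroupMap M
  have hrel : (N.map φ).relIndex (M.map φ) = (N.subgroupOf M ⊔ θ.ker).index := by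
    rw [relIndex, ← map_subgroupOf_subgroupMap φ hNM,
      ← index_comap_of_surjective _ (φ.subgroupMap_surjective M), comap_map_eq]
  rcases (QuotientGroup.isSimpleGroup_iff.mp hsimple).2 (N.subgroupOf M ⊔ θ.ker) inferInstance
    le_sup_left with h | h
  · exact Or.inr (by rw [hrel, h]; rfl)
  · exact Or.inl (by rw [hrel, h, index_top])

theorem relIndex_map_dvd (h : N.IsCompositionStep_s13 M) {p m : ℕ} [hp : Fact p.Prime] (φ : G →* H)
    (hH : Nat.card H = p ^ m) :
    (N.map φ).relIndex (M.map φ) ∣ if N.relIndex M = p then p else 1 := by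
  rcases h.relIndex_map φ with hφ | hφ
  · rw [hφ]
    exact one_dvd _
  · have hdvd : N.relIndex M ∣ p ^ m := by
      rw [← hφ, ← hH]
      exact (relIndex_dvd_card _ _).trans (card_subgroup_dvd_card _)
    obtain ⟨-, _, _⟩ := h
    have : Finite (M ⧸ N.subgroupOf M) :=
      Nat.finite_of_card_ne_zero (ne_zero_of_dvd_ne_zero (pow_ne_zero m hp.out.ne_zero) hdvd)
    have hcard : N.relIndex M = p := (IsPGroup.of_card_dvd_pow hdvd).card_eq_of_isSimpleGroup
    rw [if_pos hcard, hφ, hcard]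

end Subgroup.IsCompositionStep_s13

namespace GroupCompSeries

theorem isCompositionStep (S : GroupCompSeries G) (i : Fin S.len) :
    (S.ser i.castSucc).IsCompositionStep_s13 (S.ser i.succ) :=
  ⟨S.ser_le i, S.ser_normal i, S.ser_simple i⟩

theorem nonempty_of_chain {n : ℕ} (K : Fin (n + 1) → Subgroup G) (h0 : K 0 = ⊥)
    (hn : K (Fin.last n) = ⊤) (hK : ∀ i : Fin n, (K i.castSucc).IsCompositionStep_s13 (K i.succ)) :
    Nonempty (GroupCompSeries G) :=
  ⟨⟨n, K, h0, hn, fun i => (hK i).1, fun i => (hK i).2.1, fun i => (hK i).2.2⟩⟩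

theorem nonempty_of_isSimpleGroup_quotient {M : Subgroup G} [M.Normal] [IsSimpleGroup (G ⧸ M)]
    (S : GroupCompSeries M) : Nonempty (GroupCompSeries G) := by
  refine nonempty_of_chain (Fin.snoc (fun i => (S.ser i).map M.subtype) ⊤) (by simp [S.ser_bot])
    (Fin.snoc_last _ _) (Fin.lastCases ?_ fun i => ?_)
  · simpa [S.ser_top, ← MonoidHom.range_eq_map] using M.isCompositionStep_top
  · simpa only [Fin.succ_castSucc, Fin.snoc_castSucc] using
      (S.isCompositionStep i).map_of_injective M.subtype_injective

variable (G) in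
theorem nonempty_of_finite [Finite G] : Nonempty (GroupCompSeries G) := by
  induction hn : Nat.card G using Nat.strong_induction_on generalizing G with
  | _ n ih =>
  rcases subsingleton_or_nontrivial G with hG | hG
  · exact nonempty_of_chain (n := 0) (fun _ => ⊥) rfl (Subsingleton.elim _ _) Fin.elim0
  · obtain ⟨M, _, _⟩ := exists_normal_isSimpleGroup_quotient G
    obtain ⟨x, hx⟩ : ∃ x, x ∉ M := by
      by_contra! h
      exact QuotientGroup.nontrivial_iff.mp inferInstance ((eq_top_iff' M).mpr h)
    obtain ⟨S⟩ := ih _ (hn ▸ Finite.card_subtype_lt hx) M rfl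
    exact nonempty_of_isSimpleGroup_quotient S

theorem card_eq_prod_relIndex_map (S : GroupCompSeries G) {φ : G →* H}
    (hφ : Function.Surjective φ) :
    Nat.card H = ∏ i : Fin S.len, ((S.ser i.castSucc).map φ).relIndex ((S.ser i.succ).map φ) := by
  rw [prod_relIndex_of_monotone (fun i => (S.ser i).map φ)
      (Fin.monotone_iff_le_succ.mpr fun i => map_mono (S.ser_le i)),
    S.ser_bot, S.ser_top, Subgroup.map_bot, map_top_of_surjective φ hφ, relIndex_bot_left,
    card_top]

theorem le_count_of_surjective (S : GroupCompSeries G) {p m : ℕ} [hp : Fact p.Prime]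
    {φ : G →* H} (hφ : Function.Surjective φ) (hH : Nat.card H = p ^ m) : m ≤ S.count p := by
  classical
  have hdvd := Finset.prod_dvd_prod_of_dvd (s := Finset.univ) _ _
    fun i _ => (S.isCompositionStep i).relIndex_map_dvd φ hH
  rw [← S.card_eq_prod_relIndex_map hφ, hH, Finset.prod_ite, Finset.prod_const,
    Finset.prod_const_one, mul_one] at hdvd
  exact (Nat.pow_dvd_pow_iff_le_right hp.out.one_lt).mp hdvd

end GroupCompSeries

theorem le_cp_of_surjective [Finite G] {p m : ℕ} [Fact p.Prime] {φ : G →* H}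
    (hφ : Function.Surjective φ) (hH : Nat.card H = p ^ m) : m ≤ cp p G := by
  obtain ⟨S⟩ := GroupCompSeries.nonempty_of_finite G
  rw [cp, dif_pos ⟨S⟩]
  exact GroupCompSeries.le_count_of_surjective _ hφ hH

theorem IsCyclic.exists_surjective_zmod [hG : IsCyclic G] {n : ℕ} (hn : n ∣ Nat.card G) :
    ∃ f : G →* Multiplicative (ZMod n), Function.Surjective f :=
  ⟨(ZMod.castHom hn (ZMod n)).toAddMonoidHom.toMultiplicative.comp
      (zmodCyclicMulEquiv hG).symm.toMonoidHom,
    (ZMod.castHom_surjective hn).comp (zmodCyclicMulEquiv hG).symm.surjective⟩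

end

theorem padicValNat_pow_prime_pow_sub_one {p x : ℕ} [hp : Fact p.Prime] (hodd : Odd p)
    (hx : 1 < x) (hpx : p ∣ x - 1) (k : ℕ) :
    padicValNat p (x ^ p ^ k - 1) = padicValNat p (x - 1) + k := by
  have hpx' : ¬p ∣ x := fun h => hp.out.one_lt.ne'
    (Nat.dvd_one.mp (by simpa [Nat.sub_sub_self hx.le] using Nat.dvd_sub h hpx))
  simpa [padicValNat.prime_pow] using
    padicValNat.pow_sub_pow hodd hx (by simpa using hpx) hpx' (pow_ne_zero k hp.out.ne_zero)

theorem cp_GL_ge_of_cross_characteristic_general (p r k d : ℕ) (hp : p.Prime) (hp2 : p ≠ 2)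
    (hr : r.Prime) (hmod : r % p = 1) (hd : 1 ≤ d)
    (F : Type) [Field F] [Fintype F] (hF : Fintype.card F = r ^ p ^ k) :
    padicValNat p (r - 1) + k ≤ cp p (Matrix.GeneralLinearGroup (Fin d) F) := by
  classical
  have := Fact.mk hp
  have := Fin.pos_iff_nonempty.mp hd
  have hpr : p ∣ r - 1 := hmod ▸ Nat.dvd_sub_mod r
  obtain ⟨ψ, hψ⟩ := IsCyclic.exists_surjective_zmod (G := Fˣ)
    (pow_padicValNat_dvd (p := p) (n := Nat.card Fˣ))
  calc padicValNat p (r - 1) + k = padicValNat p (Nat.card Fˣ) := by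
        rw [Nat.card_eq_fintype_card, Fintype.card_units, hF,
          padicValNat_pow_prime_pow_sub_one (hp.odd_of_ne_two hp2) hr.one_lt hpr]
    _ ≤ cp p (Matrix.GeneralLinearGroup (Fin d) F) :=
        le_cp_of_surjective (φ := ψ.comp Matrix.GeneralLinearGroup.det)
          (hψ.comp Matrix.GeneralLinearGroup.det_surjective)
          ((Nat.card_congr Multiplicative.toAdd).trans (Nat.card_zmod _))

/-- **Example (Ex9).**  Let `p` be an odd prime, `r` a prime with `r ≡ 1 (mod p)`,
`f = p ^ k` with `k ≥ 1`, and `q = r ^ f`.  Then `c_p(GL(d, q)) ≥ v_p(r − 1) + k`. -/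
theorem cp_GL_ge_of_cross_characteristic (p r k d : ℕ) (hp : p.Prime) (hp2 : p ≠ 2)
    (hr : r.Prime) (hmod : r % p = 1) (hk : 1 ≤ k) (hd : 1 ≤ d)
    (F : Type) [Field F] [Fintype F] (hF : Fintype.card F = r ^ p ^ k) :
    padicValNat p (r - 1) + k ≤ cp p (Matrix.GeneralLinearGroup (Fin d) F) :=
  cp_GL_ge_of_cross_characteristic_general p r k d hp hp2 hr hmod hd F hF
end

section
/- Let p be a prime, f a positive integer, q = p^f, let r be a prime dividing q − 1, and let m ≥ 1 be an integer. Then (p−1)·v_p( ∏_{i=1}^m (r^{2i} − 1) ) ≤ ε_q·r^m − 1, where ε_q = 4/3 if p = 2 and f is even, ε_q = p/(p−1) if p is a Fermat prime, and ε_q = 1 otherwise. -/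
/-!
Put `s = r ^ 2`, let `d` be the order of `s` modulo `p` (take `d = 1` when `p = 2`) and
`k = ⌊m / d⌋`. Only the factors with `d ∣ i` are divisible by `p`, and lifting the exponent gives
`v_p(s^(dj) - 1) = e + v_p(j)` with `e = v_p(s^d - 1)`, so the valuation is `k e + v_p(k!)`.
Legendre's bound `(p - 1) v_p(k!) < k` together with `k r^d ≤ r^(dk) ≤ r^m` reduces the claim to
`e (p - 1) + 1 ≤ ε_q r^d`.

For odd `p`, `t = r^d` satisfies `p^e ≤ t + 1`, as `p` divides only one of `t - 1`, `t + 1`, and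
Bernoulli's inequality gives `e (p - 1) + 1 ≤ t` unless `e = 1` and `p = t + 1`; then `r = 2`,
`p` is a Fermat prime and `ε_q = p / (p - 1)` is exactly what is needed. For `p = 2`,
`e = v_2(r^2 - 1) < r` as soon as `r ≥ 5`, while `r = 3` gives `e = 3` and forces `f` to be even,
so that `ε_q = 4 / 3`.
-/

open Finset
open scoped Nat

lemma sq_le_two_pow {n : ℕ} (hn : 4 ≤ n) : n ^ 2 ≤ 2 ^ n := by
  induction n, hn using Nat.le_induction with
  | base => norm_num
  | succ n hn ih => rw [pow_succ 2]; nlinarith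

lemma mul_add_one_lt_add_one_pow {a e : ℕ} (ha : 0 < a) (he : 2 ≤ e) :
    e * a + 1 < (a + 1) ^ e := by
  induction e, he using Nat.le_induction with
  | base => nlinarith
  | succ e he ih =>
    calc (e + 1) * a + 1 < (e * a + 1) * (a + 1) := by
          nlinarith [mul_pos (by omega : 0 < e) (mul_pos ha ha)]
      _ ≤ (a + 1) ^ e * (a + 1) := Nat.mul_le_mul_right _ ih.le
      _ = (a + 1) ^ (e + 1) := (pow_succ _ _).symm

lemma dvd_pow_sub_one_iff_orderOf_dvd {p s : ℕ} (hs : 0 < s) (n : ℕ) :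
    p ∣ s ^ n - 1 ↔ orderOf (s : ZMod p) ∣ n := by
  rw [orderOf_dvd_iff_pow_eq_one, ← ZMod.natCast_eq_zero_iff,
    Nat.cast_sub (Nat.one_le_pow _ _ hs), sub_eq_zero, Nat.cast_pow, Nat.cast_one]

lemma not_dvd_pow_sub_one {p f : ℕ} (hp : 1 < p) (hf : f ≠ 0) : ¬ p ∣ p ^ f - 1 := fun h => by
  have h1 := Nat.dvd_sub (dvd_pow_self p hf) h
  rw [Nat.sub_sub_self (Nat.one_le_pow _ _ (by omega))] at h1
  exact hp.ne' (Nat.dvd_one.1 h1)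

lemma orderOf_natCast_ne_zero {p s : ℕ} [hp : Fact p.Prime] (hps : ¬ p ∣ s) :
    orderOf (s : ZMod p) ≠ 0 :=
  (Nat.pos_of_dvd_of_pos (ZMod.orderOf_dvd_card_sub_one (by rwa [Ne, ZMod.natCast_eq_zero_iff]))
    (Nat.sub_pos_of_lt hp.out.one_lt)).ne'

lemma even_of_three_dvd_two_pow_sub_one {f : ℕ} (h : 3 ∣ 2 ^ f - 1) : Even f := by
  have hord : orderOf (2 : ZMod 3) = 2 := orderOf_eq_prime (by decide) (by decide)
  rw [dvd_pow_sub_one_iff_orderOf_dvd two_pos] at h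
  exact even_iff_two_dvd.2 (by exact_mod_cast hord ▸ h)

theorem padicValNat_prod_pow_sub_one {p s d e : ℕ} [Fact p.Prime] (hs : 1 < s)
    (hvan : ∀ i, ¬ d ∣ i → ¬ p ∣ s ^ i - 1)
    (hlte : ∀ j, j ≠ 0 → padicValNat p (s ^ (d * j) - 1) = e + padicValNat p j) (m : ℕ) :
    padicValNat p (∏ i ∈ Icc 1 m, (s ^ i - 1)) = m / d * e + padicValNat p (m / d)! := by
  induction m with
  | zero => simp
  | succ m ih =>
    have hfac : ∀ i, 0 < i → s ^ i - 1 ≠ 0 := fun i hi => by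
      have := Nat.one_lt_pow hi.ne' hs; omega
    rw [prod_Icc_succ_top (by omega), padicValNat.mul
      (prod_ne_zero_iff.2 fun i hi => hfac i (mem_Icc.1 hi).1) (hfac _ (by omega)), ih]
    by_cases h : d ∣ m + 1
    · have hk : m + 1 = d * (m / d + 1) := by
        rw [← Nat.succ_div_of_dvd h, Nat.mul_div_cancel' h]
      rw [Nat.succ_div_of_dvd h, hk, hlte _ (Nat.succ_ne_zero _), Nat.factorial_succ,
        padicValNat.mul (Nat.succ_ne_zero _) (Nat.factorial_ne_zero _)]
      ring
    · rw [Nat.succ_div_of_not_dvd h, padicValNat.eq_zero_of_not_dvd (hvan _ h), add_zero]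

theorem padicValNat_prod_pow_sub_one_of_odd {p s : ℕ} [hp : Fact p.Prime] (hodd : Odd p)
    (hs : 1 < s) (hps : ¬ p ∣ s) (m : ℕ) :
    padicValNat p (∏ i ∈ Icc 1 m, (s ^ i - 1)) =
      m / orderOf (s : ZMod p) * padicValNat p (s ^ orderOf (s : ZMod p) - 1) +
        padicValNat p (m / orderOf (s : ZMod p))! := by
  set d := orderOf (s : ZMod p)
  have hdvd := dvd_pow_sub_one_iff_orderOf_dvd (p := p) (by omega : 0 < s)
  have hd := orderOf_natCast_ne_zero hps
  refine padicValNat_prod_pow_sub_one hs (fun i hi => mt (hdvd i).1 hi) (fun j hj => ?_) m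
  have := padicValNat.pow_sub_pow hodd (Nat.one_lt_pow hd hs) ((hdvd d).2 dvd_rfl)
    (fun h => hps (hp.out.prime.dvd_of_dvd_pow h)) hj
  rwa [one_pow, ← pow_mul] at this

lemma padicValNat_two_pow_two_mul_sub_one {r : ℕ} (hr : 1 < r) (hr2 : ¬ 2 ∣ r) {j : ℕ}
    (hj : j ≠ 0) :
    padicValNat 2 (r ^ (2 * j) - 1) = padicValNat 2 (r ^ 2 - 1) + padicValNat 2 j := by
  have hj' := padicValNat.pow_two_sub_one hr hr2 (by omega : 2 * j ≠ 0) (even_two_mul j)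
  have h1 := padicValNat.pow_two_sub_one hr hr2 two_ne_zero even_two
  rw [padicValNat.mul two_ne_zero hj, padicValNat_self] at hj'
  rw [padicValNat_self] at h1
  omega

theorem padicValNat_two_prod_sq_pow_sub_one {r : ℕ} (hr : 1 < r) (hr2 : ¬ 2 ∣ r) (m : ℕ) :
    padicValNat 2 (∏ i ∈ Icc 1 m, ((r ^ 2) ^ i - 1)) =
      m * padicValNat 2 (r ^ 2 - 1) + padicValNat 2 m ! := by
  have := padicValNat_prod_pow_sub_one (p := 2) (Nat.one_lt_pow two_ne_zero hr)
    (fun i hi => absurd (one_dvd i) hi) (fun j hj => by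
      rw [one_mul, ← pow_mul]; exact padicValNat_two_pow_two_mul_sub_one hr hr2 hj) m
  simpa using this

lemma pow_padicValNat_sq_sub_one_le {p t : ℕ} [hp : Fact p.Prime] (hodd : Odd p) (ht : 0 < t) :
    p ^ padicValNat p (t ^ 2 - 1) ≤ t + 1 := by
  obtain rfl | ht : t = 1 ∨ 1 < t := by omega
  · simp
  have hdvd : p ^ padicValNat p (t ^ 2 - 1) ∣ (t + 1) * (t - 1) := by
    rw [← one_pow 2, ← Nat.sq_sub_sq]
    exact pow_padicValNat_dvd
  have hcop : ¬ p ∣ t + 1 ∨ ¬ p ∣ t - 1 := by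
    by_contra! h
    have h2 : p ∣ 2 := by simpa [show t + 1 - (t - 1) = 2 by omega] using Nat.dvd_sub h.1 h.2
    have := Nat.le_of_dvd two_pos h2
    have := hp.out.two_le
    obtain ⟨k, rfl⟩ := hodd
    omega
  rcases hcop with h | h
  · have := ((hp.out.coprime_iff_not_dvd.2 h).pow_left _).dvd_of_dvd_mul_left hdvd
    exact (Nat.le_of_dvd (by omega) this).trans (by omega)
  · have := ((hp.out.coprime_iff_not_dvd.2 h).pow_left _).dvd_of_dvd_mul_right hdvd
    exact Nat.le_of_dvd (by omega) this

lemma padicValNat_sq_sub_one_mul_le_or_eq {p t : ℕ} [hp : Fact p.Prime] (hodd : Odd p)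
    (ht : 0 < t) :
    padicValNat p (t ^ 2 - 1) * (p - 1) + 1 ≤ t ∨ (p = t + 1 ∧ padicValNat p (t ^ 2 - 1) = 1) := by
  have hle := pow_padicValNat_sq_sub_one_le hodd ht
  have hp2 := hp.out.two_le
  rcases lt_trichotomy (padicValNat p (t ^ 2 - 1)) 1 with h | h | h
  · left; rw [Nat.lt_one_iff.1 h]; omega
  · rw [h, pow_one] at hle
    rw [h]
    omega
  · have := mul_add_one_lt_add_one_pow (a := p - 1) (by omega) h
    rw [Nat.sub_add_cancel hp.out.one_le] at this
    left; omega

lemma one_le_epsq (p f : ℕ) : 1 ≤ epsq p f := by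
  unfold epsq
  split_ifs with _ hF
  · norm_num
  · obtain ⟨n, rfl⟩ := hF
    have : (0 : ℚ) < 2 ^ 2 ^ n := by positivity
    rw [le_div_iff₀ (by push_cast; linarith)]
    linarith
  · exact le_rfl

lemma epsq_two_of_even {f : ℕ} (hf : Even f) : epsq 2 f = 4 / 3 := by
  simp [epsq, hf]

lemma epsq_of_fermat {p : ℕ} (f : ℕ) (hF : ∃ n : ℕ, p = 2 ^ 2 ^ n + 1) :
    epsq p f = p / (p - 1) := by
  have hp2 : p ≠ 2 := by
    obtain ⟨n, rfl⟩ := hF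
    have := Nat.one_lt_two_pow (pow_ne_zero n two_ne_zero)
    omega
  simp [epsq, hp2, hF]

lemma exists_eq_fermat_of_prime_pow_add_one {r d : ℕ} (hr : r.Prime) (hd : d ≠ 0)
    (hp : (r ^ d + 1).Prime) (hodd : Odd (r ^ d + 1)) : ∃ n : ℕ, r ^ d + 1 = 2 ^ 2 ^ n + 1 := by
  have hr2 : r = 2 := (hr.even_iff).1 (Nat.even_pow.1 (by simpa [Nat.odd_add_one] using hodd)).1
  subst hr2
  obtain ⟨n, rfl⟩ := Nat.pow_of_pow_add_prime one_lt_two hd hp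
  exact ⟨n, rfl⟩

theorem sub_one_mul_add_padicValNat_factorial_le {p e r d m k : ℕ} [hp : Fact p.Prime] {c : ℚ}
    (hc : 1 ≤ c) (hr : 2 ≤ r) (hd : d ≠ 0) (hkm : d * k ≤ m)
    (hect : (e : ℚ) * (p - 1) + 1 ≤ c * r ^ d) :
    ((p : ℚ) - 1) * ((k * e + padicValNat p k ! : ℕ) : ℚ) ≤ c * r ^ m - 1 := by
  have hr1 : (1 : ℚ) ≤ r := by exact_mod_cast (by omega : 1 ≤ r)
  have hpow : ((r : ℚ) ^ d) ^ k ≤ r ^ m := by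
    rw [← pow_mul]
    exact pow_le_pow_right₀ hr1 hkm
  rcases k.eq_zero_or_pos with rfl | hk
  · simp only [zero_mul, Nat.factorial_zero, padicValNat_one_right, add_zero, Nat.cast_zero,
      mul_zero, sub_nonneg]
    nlinarith [one_le_pow₀ (n := m) hr1]
  have hlegendre : ((p : ℚ) - 1) * padicValNat p k ! + 1 ≤ k := by
    have := sub_one_mul_padicValNat_factorial_lt_of_ne_zero p hk.ne'
    have hp1 := hp.out.one_le
    exact_mod_cast (show (p - 1) * padicValNat p k ! + 1 ≤ k by omega)
  have hmulpow : (k : ℚ) * r ^ d ≤ (r ^ d) ^ k := by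
    rw [mul_comm]
    exact_mod_cast Nat.mul_le_pow (Nat.one_lt_pow hd (by omega)).ne' k
  push_cast
  calc ((p : ℚ) - 1) * (k * e + padicValNat p k !)
      = k * (e * (p - 1) + 1) + (((p : ℚ) - 1) * padicValNat p k ! - k) := by ring
    _ ≤ k * (c * r ^ d) + (-1) := by gcongr; linarith
    _ = c * (k * r ^ d) - 1 := by ring
    _ ≤ c * (r ^ d) ^ k - 1 := by gcongr
    _ ≤ c * r ^ m - 1 := by gcongr

theorem padicValNat_prod_bound_of_odd {p r : ℕ} [hp : Fact p.Prime] (hodd : Odd p)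
    (hr : r.Prime) (hpr : ¬ p ∣ r) (f m : ℕ) :
    ((p : ℚ) - 1) * padicValNat p (∏ i ∈ Icc 1 m, (r ^ (2 * i) - 1)) ≤ epsq p f * r ^ m - 1 := by
  have hps : ¬ p ∣ r ^ 2 := fun h => hpr (hp.out.prime.dvd_of_dvd_pow h)
  set d := orderOf ((r ^ 2 : ℕ) : ZMod p)
  have hd : d ≠ 0 := orderOf_natCast_ne_zero hps
  have hV : padicValNat p (∏ i ∈ Icc 1 m, (r ^ (2 * i) - 1)) =
      m / d * padicValNat p ((r ^ d) ^ 2 - 1) + padicValNat p (m / d)! := by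
    simp_rw [pow_mul, ← pow_mul r d, mul_comm d, pow_mul]
    exact padicValNat_prod_pow_sub_one_of_odd hodd (Nat.one_lt_pow two_ne_zero hr.one_lt) hps m
  rw [hV]
  refine sub_one_mul_add_padicValNat_factorial_le (one_le_epsq p f) hr.two_le hd
    (Nat.mul_div_le m d) ?_
  rcases padicValNat_sq_sub_one_mul_le_or_eq hodd (pow_pos hr.pos d) with h | ⟨hpt, he⟩
  · calc _ ≤ ((r ^ d : ℕ) : ℚ) := by
          have := hp.out.one_le
          exact_mod_cast h
      _ ≤ epsq p f * r ^ d := by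
          push_cast
          exact le_mul_of_one_le_left (by positivity) (one_le_epsq p f)
  · have hF := exists_eq_fermat_of_prime_pow_add_one hr hd (hpt ▸ hp.out) (hpt ▸ hodd)
    rw [← hpt] at hF
    rw [he, epsq_of_fermat f hF]
    have : (r : ℚ) ^ d = p - 1 := by rw [hpt]; push_cast; ring
    have hp1 : (p : ℚ) - 1 ≠ 0 := by
      rw [← this]; exact pow_ne_zero _ (by exact_mod_cast hr.ne_zero)
    rw [this, div_mul_cancel₀ _ hp1, Nat.cast_one]
    linarith

theorem padicValNat_two_prod_bound {f r : ℕ} (hr : r.Prime) (hr2 : ¬ 2 ∣ r)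
    (hdvd : r ∣ 2 ^ f - 1) (m : ℕ) :
    (((2 : ℕ) : ℚ) - 1) * padicValNat 2 (∏ i ∈ Icc 1 m, (r ^ (2 * i) - 1)) ≤
      epsq 2 f * r ^ m - 1 := by
  have hV : padicValNat 2 (∏ i ∈ Icc 1 m, (r ^ (2 * i) - 1)) =
      m * padicValNat 2 (r ^ 2 - 1) + padicValNat 2 m ! := by
    simp_rw [pow_mul]
    exact padicValNat_two_prod_sq_pow_sub_one hr.one_lt hr2 m
  rw [hV]
  refine sub_one_mul_add_padicValNat_factorial_le (d := 1) (one_le_epsq 2 f) hr.two_le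
    one_ne_zero (one_mul m).le ?_
  push_cast
  rw [pow_one]
  obtain rfl | hr5 : r = 3 ∨ 5 ≤ r := by
    have := hr.two_le
    have : r ≠ 4 := by rintro rfl; exact hr2 (by norm_num)
    omega
  · have h8 : padicValNat 2 (3 ^ 2 - 1) = 3 := padicValNat.prime_pow (p := 2) 3
    rw [epsq_two_of_even (even_of_three_dvd_two_pow_sub_one hdvd), h8]
    norm_num
  · have hlt : padicValNat 2 (r ^ 2 - 1) < r := by
      have hle := Nat.le_of_dvd (Nat.sub_pos_of_lt (by nlinarith))
        (pow_padicValNat_dvd (p := 2) (n := r ^ 2 - 1))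
      exact (Nat.pow_lt_pow_iff_right one_lt_two).1 <| hle.trans_lt <|
        (Nat.sub_lt (by positivity) one_pos).trans_le (sq_le_two_pow (by omega))
    calc _ ≤ (r : ℚ) := by norm_num; exact_mod_cast hlt
      _ ≤ epsq 2 f * r := le_mul_of_one_le_left (by positivity) (one_le_epsq 2 f)

theorem padicValNat_prod_bound_general (p f r m : ℕ) (hp : p.Prime) (hf : 0 < f)
    (hr : r.Prime) (hdvd : r ∣ p ^ f - 1) :
    ((p : ℚ) - 1) * padicValNat p (∏ i ∈ Finset.Icc 1 m, (r ^ (2 * i) - 1)) ≤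
      epsq p f * r ^ m - 1 := by
  have := Fact.mk hp
  have hpr : ¬ p ∣ r := fun h => not_dvd_pow_sub_one hp.one_lt hf.ne' (h.trans hdvd)
  rcases hp.eq_two_or_odd' with rfl | hodd
  · exact padicValNat_two_prod_bound hr hpr hdvd m
  · exact padicValNat_prod_bound_of_odd hodd hr hpr f m

/-- **(Inequality (3) of the `C_6` case.)**  Let `q = p ^ f`, let `r` be a prime dividing
`q − 1` and let `m ≥ 1`.  Then `(p − 1)·v_p(∏_{i=1}^m (r^{2i} − 1)) ≤ ε_q·r^m − 1`. -/
theorem padicValNat_prod_bound (p f r m : ℕ) (hp : p.Prime) (hf : 0 < f)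
    (hr : r.Prime) (hdvd : r ∣ p ^ f - 1) (hm : 1 ≤ m) :
    ((p : ℚ) - 1) * padicValNat p (∏ i ∈ Finset.Icc 1 m, (r ^ (2 * i) - 1)) ≤
      epsq p f * r ^ m - 1 :=
  padicValNat_prod_bound_general p f r m hp hf hr hdvd
end

section
/- Let p be an odd prime and r a prime distinct from p. Let ℓ be the multiplicative order of r^2 modulo p, and let e = v_p(r^{2ℓ} − 1) (so e ≥ 1). Then for every integer m ≥ 1, v_p( ∏_{i=1}^m (r^{2i} − 1) ) = ⌊m/ℓ⌋·e + v_p( ⌊m/ℓ⌋! ). -/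
private lemma padicValNat_prod_aux {p : ℕ} [Fact p.Prime] {α : Type*} (s : Finset α)
    (f : α → ℕ) (h : ∀ i ∈ s, f i ≠ 0) :
    padicValNat p (∏ i ∈ s, f i) = ∑ i ∈ s, padicValNat p (f i) := by
  classical
  induction s using Finset.cons_induction with
  | empty => simp
  | cons a s ha ih =>
    rw [Finset.prod_cons, Finset.sum_cons,
      padicValNat.mul (h a (Finset.mem_cons_self a s))
        (Finset.prod_ne_zero_iff.mpr fun i hi => h i (Finset.mem_cons_of_mem hi)),
      ih fun i hi => h i (Finset.mem_cons_of_mem hi)]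

private lemma padicValNat_factorial_sum {p : ℕ} [Fact p.Prime] (n : ℕ) :
    padicValNat p (Nat.factorial n) = ∑ j ∈ Finset.Icc 1 n, padicValNat p j := by
  induction n with
  | zero => simp
  | succ n ih =>
    rw [Finset.sum_Icc_succ_top (by omega), ← ih, Nat.factorial_succ,
      padicValNat.mul (by omega) (Nat.factorial_ne_zero n), add_comm]


/-- Let `p` be an odd prime and `r` a prime distinct from `p`.  Let `ℓ` be the
multiplicative order of `r ^ 2` modulo `p` and `e = v_p(r^{2ℓ} − 1)` (so `e ≥ 1`).
Then for every `m ≥ 1`,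
`v_p(∏_{i=1}^m (r^{2i} − 1)) = ⌊m/ℓ⌋·e + v_p(⌊m/ℓ⌋!)`. -/
theorem padicValNat_prod_eq (p r ℓ e m : ℕ) (hp : p.Prime) (hp2 : p ≠ 2)
    (hr : r.Prime) (hrp : r ≠ p)
    (hℓ : ℓ = orderOf ((r : ZMod p) ^ 2))
    (he : e = padicValNat p (r ^ (2 * ℓ) - 1)) (hm : 1 ≤ m) :
    1 ≤ e ∧
    padicValNat p (∏ i ∈ Finset.Icc 1 m, (r ^ (2 * i) - 1)) =
      m / ℓ * e + padicValNat p (Nat.factorial (m / ℓ)) := by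
  haveI : Fact p.Prime := ⟨hp⟩
  have hr2 : 2 ≤ r := hr.two_le
  have hodd : Odd p := hp.odd_of_ne_two hp2
  have hpr : ¬ p ∣ r := fun h => hrp ((Nat.prime_dvd_prime_iff_eq hp hr).mp h).symm
  have hrz : (r : ZMod p) ≠ 0 := by
    rw [Ne, ZMod.natCast_eq_zero_iff]; exact hpr
  -- key divisibility criterion
  have key : ∀ i : ℕ, p ∣ r ^ (2 * i) - 1 ↔ ℓ ∣ i := by
    intro i
    have h1 : 1 ≤ r ^ (2 * i) := Nat.one_le_pow _ _ (by omega)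
    rw [hℓ, orderOf_dvd_iff_pow_eq_one, ← ZMod.natCast_eq_zero_iff,
      Nat.cast_sub h1, Nat.cast_pow, Nat.cast_one, sub_eq_zero, ← pow_mul]
  have hℓpos : 0 < ℓ := by
    have hpow : ((r : ZMod p) ^ 2) ^ (p - 1) = 1 := by
      rw [← pow_mul, mul_comm, pow_mul, ZMod.pow_card_sub_one_eq_one hrz, one_pow]
    have hdvd : ℓ ∣ p - 1 := hℓ ▸ orderOf_dvd_of_pow_eq_one hpow
    rcases Nat.eq_zero_or_pos ℓ with h | h
    · exfalso; rw [h] at hdvd; have := Nat.eq_zero_of_zero_dvd hdvd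
      have := hp.two_le; omega
    · exact h
  have hlt : ∀ i : ℕ, 0 < i → 1 < r ^ (2 * i) := fun i hi =>
    Nat.one_lt_pow (by omega) (by omega)
  have hne : ∀ i : ℕ, 0 < i → r ^ (2 * i) - 1 ≠ 0 := fun i hi => by
    have := hlt i hi; omega
  have he1 : 1 ≤ e := by
    rw [he]
    exact one_le_padicValNat_of_dvd (by have := hlt ℓ hℓpos; omega)
      ((key ℓ).mpr dvd_rfl)
  refine ⟨he1, ?_⟩
  -- LTE
  have hLTE : ∀ j : ℕ, j ≠ 0 →
      padicValNat p (r ^ (2 * (ℓ * j)) - 1) = e + padicValNat p j := by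
    intro j hj
    have hx : ¬ p ∣ r ^ (2 * ℓ) := fun h => hpr (hp.dvd_of_dvd_pow h)
    have h1 : (1 : ℕ) < r ^ (2 * ℓ) := hlt ℓ hℓpos
    have : r ^ (2 * (ℓ * j)) = (r ^ (2 * ℓ)) ^ j := by
      rw [← pow_mul]; ring_nf
    rw [this, he]
    have := padicValNat.pow_sub_pow (p := p) hodd (x := r ^ (2 * ℓ)) (y := 1)
      h1 ((key ℓ).mpr dvd_rfl) hx hj
    simpa using this
  have hzero : ∀ i : ℕ, ¬ ℓ ∣ i → padicValNat p (r ^ (2 * i) - 1) = 0 := fun i hi =>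
    padicValNat.eq_zero_of_not_dvd (fun h => hi ((key i).mp h))
  rw [padicValNat_prod_aux _ _ (fun i hi => hne i (by
    exact (Finset.mem_Icc.mp hi).1))]
  classical
  rw [← Finset.sum_filter_add_sum_filter_not (Finset.Icc 1 m) (fun i => ℓ ∣ i)]
  have h2 : ∑ i ∈ (Finset.Icc 1 m).filter (fun i => ¬ ℓ ∣ i),
      padicValNat p (r ^ (2 * i) - 1) = 0 :=
    Finset.sum_eq_zero fun i hi => hzero i (Finset.mem_filter.mp hi).2
  rw [h2, add_zero]
  have h3 : ∑ i ∈ (Finset.Icc 1 m).filter (fun i => ℓ ∣ i),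
      padicValNat p (r ^ (2 * i) - 1)
      = ∑ j ∈ Finset.Icc 1 (m / ℓ), padicValNat p (r ^ (2 * (ℓ * j)) - 1) := by
    refine Finset.sum_nbij' (fun i => i / ℓ) (fun j => ℓ * j) ?_ ?_ ?_ ?_ ?_
    · intro a ha
      obtain ⟨ha1, hd⟩ := Finset.mem_filter.mp ha
      obtain ⟨h1, h2'⟩ := Finset.mem_Icc.mp ha1
      refine Finset.mem_Icc.mpr ⟨?_, Nat.div_le_div_right h2'⟩
      exact Nat.one_le_div_iff hℓpos |>.mpr (Nat.le_of_dvd (by omega) hd)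
    · intro j hj
      obtain ⟨h1, h2'⟩ := Finset.mem_Icc.mp hj
      refine Finset.mem_filter.mpr ⟨Finset.mem_Icc.mpr ⟨by nlinarith, ?_⟩, ⟨j, rfl⟩⟩
      calc ℓ * j ≤ ℓ * (m / ℓ) := Nat.mul_le_mul_left _ h2'
        _ ≤ m := Nat.mul_div_le m ℓ |>.trans_eq rfl |>.trans (le_refl m)
    · intro a ha
      exact Nat.mul_div_cancel' (Finset.mem_filter.mp ha).2
    · intro j hj
      exact Nat.mul_div_cancel_left j hℓpos
    · intro a ha
      rw [Nat.mul_div_cancel' (Finset.mem_filter.mp ha).2]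
  rw [h3]
  have h4 : ∀ j ∈ Finset.Icc 1 (m / ℓ),
      padicValNat p (r ^ (2 * (ℓ * j)) - 1) = e + padicValNat p j := fun j hj =>
    hLTE j (by have := (Finset.mem_Icc.mp hj).1; omega)
  rw [Finset.sum_congr rfl h4, Finset.sum_add_distrib, Finset.sum_const,
    Nat.card_Icc, padicValNat_factorial_sum, smul_eq_mul, Nat.add_sub_cancel]
end
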